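/- arXiv:1703.01539 — 2 statements merged into one kernel-verified Lean document; each statement's English description precedes it below -/
import Mathlib

section
/- Let X be a metric space, A a finite subset of X partitioned as A = A_1 ⊎ ⋯ ⊎ A_s with each A_i nonempty, and let k ≥ 1, t ≥ 0 be integers with t ≤ |A|. Let K* ⊆ A (nonempty, |K*| ≤ k) and O* ⊆ A (|O*| ≤ t) attain the (k,t)-means cost Cmns(A,k,t), and set t_i* = |O* ∩ A_i| for each i. Then ∑_{i=1}^s Cmns(A_i, k, t_i*) ≤ 4·Cmns(A, k, t). -/
/-! Move every optimal center to a nearest point of the part `A_i`. For `p ∈ A_i` whose nearest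
center is `c`, the snapped center `c'` satisfies `d(c, c') ≤ d(c, p)`, so `d(p, c') ≤ 2 d(p, c)`.
Keeping the outliers `O* ∩ A_i` in each part, the local cost is at most four times the share of
the optimal cost carried by `A_i \ O*`, and these shares add up to `Cmns(A, k, t)`. -/

open Metric Finset

/-- The (k,t)-means cost of a finite point set `S`: the minimum over nonempty
`K ⊆ S` with `|K| ≤ k` and `O ⊆ S` with `|O| ≤ t` of `∑_{p ∈ S \ O} d(p, K)²`. -/
noncomputable def meansCost {X : Type*} [MetricSpace X] [DecidableEq X]
    (S : Finset X) (k t : ℕ) : ℝ :=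
  sInf { c : ℝ | ∃ K O : Finset X, K ⊆ S ∧ K.Nonempty ∧ K.card ≤ k ∧
    O ⊆ S ∧ O.card ≤ t ∧ c = ∑ p ∈ S \ O, (infDist p (K : Set X)) ^ 2 }

section

variable {X : Type*} [MetricSpace X]

theorem Finset.exists_infDist_eq_dist (K : Finset X) (hK : K.Nonempty) (p : X) :
    ∃ c ∈ K, infDist p (K : Set X) = dist p c := by
  simpa using K.finite_toSet.isCompact.exists_infDist_eq_dist (by simpa using hK) p

theorem exists_subset_infDist_le_two_mul (B K : Finset X) (hB : B.Nonempty)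
    (hK : K.Nonempty) :
    ∃ K' ⊆ B, K'.Nonempty ∧ K'.card ≤ K.card ∧
      ∀ p ∈ B, infDist p (K' : Set X) ≤ 2 * infDist p (K : Set X) := by
  classical
  choose nearest hnearest_mem hnearest_le using
    fun c : X => B.exists_min_image (dist c) hB
  refine ⟨K.image nearest, ?_, hK.image nearest, card_image_le, fun p hp => ?_⟩
  · simpa only [image_subset_iff] using fun c _ => hnearest_mem c
  obtain ⟨c, hc, hpc⟩ := K.exists_infDist_eq_dist hK p
  calc infDist p (K.image nearest : Set X)
      ≤ dist p (nearest c) := infDist_le_dist_of_mem (by simpa using ⟨c, hc, rfl⟩)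
    _ ≤ dist p c + dist c (nearest c) := dist_triangle _ _ _
    _ ≤ dist p c + dist c p := by gcongr; exact hnearest_le c p hp
    _ = 2 * infDist p (K : Set X) := by rw [dist_comm c p, hpc]; ring

variable [DecidableEq X]

theorem meansCost_le_sum {S K O : Finset X} {k t : ℕ} (hKS : K ⊆ S) (hK : K.Nonempty)
    (hKk : K.card ≤ k) (hOS : O ⊆ S) (hOt : O.card ≤ t) :
    meansCost S k t ≤ ∑ p ∈ S \ O, infDist p (K : Set X) ^ 2 := by
  refine csInf_le ⟨0, ?_⟩ ⟨K, O, hKS, hK, hKk, hOS, hOt, rfl⟩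
  rintro c ⟨-, -, -, -, -, -, -, rfl⟩
  positivity

theorem meansCost_empty (k t : ℕ) : meansCost (∅ : Finset X) k t = 0 := by
  rw [meansCost, ← Real.sInf_empty]
  congr 1
  refine Set.eq_empty_of_forall_notMem ?_
  rintro c ⟨K, -, hKS, hK, -⟩
  exact hK.ne_empty (subset_empty.1 hKS)

theorem meansCost_inter_le_four_mul (S K O : Finset X) {k : ℕ} (hK : K.Nonempty)
    (hKk : K.card ≤ k) :
    meansCost S k (O ∩ S).card ≤ 4 * ∑ p ∈ S \ O, infDist p (K : Set X) ^ 2 := by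
  rcases S.eq_empty_or_nonempty with rfl | hS
  · simp [meansCost_empty]
  obtain ⟨K', hK'S, hK', hK'K, hdist⟩ := exists_subset_infDist_le_two_mul S K hS hK
  have hsdiff : S \ (O ∩ S) = S \ O := by ext; simp
  calc meansCost S k (O ∩ S).card
      ≤ ∑ p ∈ S \ O, infDist p (K' : Set X) ^ 2 := by
        rw [← hsdiff]; exact meansCost_le_sum hK'S hK' (hK'K.trans hKk) inter_subset_right le_rfl
    _ ≤ ∑ p ∈ S \ O, (2 * infDist p (K : Set X)) ^ 2 := by
        gcongr with p hp
        · exact infDist_nonneg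
        · exact hdist p (mem_sdiff.1 hp).1
    _ = 4 * ∑ p ∈ S \ O, infDist p (K : Set X) ^ 2 := by
        rw [mul_sum]; congr 1 with p; ring

end

theorem sum_local_meansCost_le_general {X : Type*} [MetricSpace X] [DecidableEq X]
    {s : ℕ} (𝒜 : Fin s → Finset X)
    (hdisj : ∀ i j, i ≠ j → Disjoint (𝒜 i) (𝒜 j))
    (A : Finset X) (hA : A = Finset.univ.biUnion 𝒜)
    (k t : ℕ)
    (Kstar Ostar : Finset X)
    (hK2 : Kstar.Nonempty) (hK3 : Kstar.card ≤ k)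
    (hopt : (∑ p ∈ A \ Ostar, (infDist p (Kstar : Set X)) ^ 2) = meansCost A k t) :
    ∑ i, meansCost (𝒜 i) k ((Ostar ∩ 𝒜 i).card) ≤ 4 * meansCost A k t := by
  have hsdiff : A \ Ostar = univ.biUnion fun i => 𝒜 i \ Ostar := by
    ext; simp [hA, and_comm]
  calc ∑ i, meansCost (𝒜 i) k ((Ostar ∩ 𝒜 i).card)
      ≤ ∑ i, 4 * ∑ p ∈ 𝒜 i \ Ostar, infDist p (Kstar : Set X) ^ 2 :=
        sum_le_sum fun i _ => meansCost_inter_le_four_mul _ _ _ hK2 hK3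
    _ = 4 * ∑ p ∈ A \ Ostar, infDist p (Kstar : Set X) ^ 2 := by
        rw [← mul_sum, hsdiff, sum_biUnion fun i _ j _ hij =>
          (hdisj i j hij).mono sdiff_subset sdiff_subset]
    _ = 4 * meansCost A k t := by rw [hopt]

theorem sum_local_meansCost_le {X : Type*} [MetricSpace X] [DecidableEq X]
    {s : ℕ} (𝒜 : Fin s → Finset X)
    (hdisj : ∀ i j, i ≠ j → Disjoint (𝒜 i) (𝒜 j))
    (hne : ∀ i, (𝒜 i).Nonempty)
    (A : Finset X) (hA : A = Finset.univ.biUnion 𝒜)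
    (k t : ℕ) (hk : 1 ≤ k) (ht : t ≤ A.card)
    (Kstar Ostar : Finset X)
    (hK1 : Kstar ⊆ A) (hK2 : Kstar.Nonempty) (hK3 : Kstar.card ≤ k)
    (hO1 : Ostar ⊆ A) (hO2 : Ostar.card ≤ t)
    (hopt : (∑ p ∈ A \ Ostar, (infDist p (Kstar : Set X)) ^ 2) = meansCost A k t) :
    ∑ i, meansCost (𝒜 i) k ((Ostar ∩ 𝒜 i).card) ≤ 4 * meansCost A k t :=
  sum_local_meansCost_le_general 𝒜 hdisj A hA k t Kstar Ostar hK2 hK3 hopt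
end

section
/- In the uncertain setup with truncated distances, let k ≥ 1, t ≥ 0 and τ ≥ 0, and let A be partitioned as A = A_1 ⊎ ⋯ ⊎ A_s with supp(A_i) nonempty for each i. Let K* ⊆ supp(A) (nonempty, |K*| ≤ k) and O* ⊆ A (|O*| ≤ t) attain the truncated (k,t)-median cost C(A,k,t,ρ_τ), and set t_i* = |O* ∩ A_i| for each i. Then ∑_{i=1}^s C(A_i, k, t_i*, ρ_{2τ}) ≤ 2·C(A, k, t, ρ_τ). -/
open Metric Finset

/-! The proof projects the optimal global centres. For a group `Z`, send each centre `m ∈ K*`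
to a point `u` of `supp Z` nearest to `m`. For every `p` in the support of a node `j ∈ Z`,
`L_τ(m,u) ≤ L_τ(m,p)`, so averaging the truncated triangle inequality
`L_{2τ}(p,u) ≤ L_τ(p,m) + L_τ(m,u)` over `w_j` gives `ρ_{2τ}(j,u) ≤ 2 ρ_τ(j,m)`.
Keeping the outliers `O* ∩ Z` makes the projected centres a feasible solution for `Z` of cost
at most twice the share of `Z` in the optimal global cost, and the groups partition `A`. -/

/-- The support of a set `Z` of uncertain nodes: all points of `SP` given positive
weight by some node of `Z`. -/
noncomputable def nodeSupp {P : Type*} {ι : Type*} [DecidableEq P] [DecidableEq ι]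
    (SP : Finset P) (w : ι → P → ℝ) (Z : Finset ι) : Finset P :=
  open Classical in
  Z.biUnion fun j => SP.filter fun p => 0 < w j p

/-- The truncated (k,t)-median cost `C(Z,k,t,ρ_τ)`: the minimum over nonempty
`K ⊆ supp Z` with `|K| ≤ k` and `O ⊆ Z` with `|O| ≤ t` of
`∑_{j ∈ Z \ O} min_{m ∈ K} ρ_τ(j,m)`, where `ρ_τ(j,u) = E_j[L_τ(·,u)]`. -/
noncomputable def trMedCost {P : Type*} {ι : Type*} [MetricSpace P]
    [DecidableEq P] [DecidableEq ι]
    (SP : Finset P) (w : ι → P → ℝ) (Z : Finset ι) (k t : ℕ) (τ : ℝ) : ℝ :=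
  sInf { c : ℝ | ∃ (K : Finset P) (O : Finset ι),
    K ⊆ nodeSupp SP w Z ∧ K.Nonempty ∧ K.card ≤ k ∧ O ⊆ Z ∧ O.card ≤ t ∧
    c = ∑ j ∈ Z \ O,
      sInf ((fun m => ∑ p ∈ SP, w j p * max (dist p m - τ) 0) '' (K : Set P)) }

section TruncDist

variable {P : Type*} [MetricSpace P]

/-- The paper's `L_τ`. -/
def truncDist (τ : ℝ) (x y : P) : ℝ := max (dist x y - τ) 0

lemma truncDist_nonneg (τ : ℝ) (x y : P) : 0 ≤ truncDist τ x y := le_max_right _ _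

lemma truncDist_comm (τ : ℝ) (x y : P) : truncDist τ x y = truncDist τ y x := by
  rw [truncDist, truncDist, dist_comm]

lemma truncDist_add_le (a b : ℝ) (x y z : P) :
    truncDist (a + b) x z ≤ truncDist a x y + truncDist b y z := by
  unfold truncDist
  have := dist_triangle x y z
  refine max_le ?_ (add_nonneg (le_max_right _ _) (le_max_right _ _))
  linarith [le_max_left (dist x y - a) 0, le_max_left (dist y z - b) 0]

lemma truncDist_le_of_dist_le {τ : ℝ} {x y z : P} (h : dist x y ≤ dist x z) :
    truncDist τ x y ≤ truncDist τ x z :=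
  max_le_max_right 0 (by linarith)

/-- `expTruncDist SP (w j) τ u` is the paper's `ρ_τ(j,u)`. -/
def expTruncDist (SP : Finset P) (w : P → ℝ) (τ : ℝ) (u : P) : ℝ :=
  ∑ p ∈ SP, w p * truncDist τ p u

variable {SP : Finset P} {w : P → ℝ}

lemma expTruncDist_nonneg (hw0 : ∀ p ∈ SP, 0 ≤ w p) (τ : ℝ) (u : P) :
    0 ≤ expTruncDist SP w τ u :=
  sum_nonneg fun p hp => mul_nonneg (hw0 p hp) (truncDist_nonneg τ p u)

lemma expTruncDist_add_le (hw0 : ∀ p ∈ SP, 0 ≤ w p) (hw1 : ∑ p ∈ SP, w p = 1)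
    (a b : ℝ) (m u : P) :
    expTruncDist SP w (a + b) u ≤ expTruncDist SP w a m + truncDist b m u :=
  calc expTruncDist SP w (a + b) u
      ≤ ∑ p ∈ SP, w p * (truncDist a p m + truncDist b m u) :=
        sum_le_sum fun p hp => mul_le_mul_of_nonneg_left (truncDist_add_le a b p m u) (hw0 p hp)
    _ = expTruncDist SP w a m + (∑ p ∈ SP, w p) * truncDist b m u := by
        simp only [expTruncDist, mul_add, sum_add_distrib, sum_mul]
    _ = expTruncDist SP w a m + truncDist b m u := by rw [hw1, one_mul]

lemma truncDist_le_expTruncDist (hw0 : ∀ p ∈ SP, 0 ≤ w p) (hw1 : ∑ p ∈ SP, w p = 1)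
    {τ : ℝ} {m u : P} (hu : ∀ p ∈ SP, 0 < w p → dist m u ≤ dist m p) :
    truncDist τ m u ≤ expTruncDist SP w τ m :=
  calc truncDist τ m u = ∑ p ∈ SP, w p * truncDist τ m u := by rw [← sum_mul, hw1, one_mul]
    _ ≤ expTruncDist SP w τ m := by
        refine sum_le_sum fun p hp => ?_
        rcases (hw0 p hp).eq_or_lt with hp0 | hp0
        · simp [← hp0]
        · rw [truncDist_comm τ p m]
          exact mul_le_mul_of_nonneg_left (truncDist_le_of_dist_le (hu p hp hp0)) hp0.le

lemma expTruncDist_two_mul_le (hw0 : ∀ p ∈ SP, 0 ≤ w p) (hw1 : ∑ p ∈ SP, w p = 1)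
    (τ : ℝ) {m u : P} (hu : ∀ p ∈ SP, 0 < w p → dist m u ≤ dist m p) :
    expTruncDist SP w (2 * τ) u ≤ 2 * expTruncDist SP w τ m := by
  rw [two_mul τ]
  linarith [expTruncDist_add_le hw0 hw1 τ τ m u, truncDist_le_expTruncDist (τ := τ) hw0 hw1 hu]

end TruncDist

section Cost

variable {P ι : Type*} [DecidableEq P] [DecidableEq ι]
  {SP : Finset P} {w : ι → P → ℝ} {Z : Finset ι}

lemma mem_nodeSupp {p : P} : p ∈ nodeSupp SP w Z ↔ ∃ j ∈ Z, p ∈ SP ∧ 0 < w j p := by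
  simp [nodeSupp]

variable [MetricSpace P]

lemma trMedCost_le (hw0 : ∀ j ∈ Z, ∀ p ∈ SP, 0 ≤ w j p) {k t : ℕ} {τ : ℝ}
    {K : Finset P} {O : Finset ι} (hKZ : K ⊆ nodeSupp SP w Z) (hK : K.Nonempty)
    (hKk : K.card ≤ k) (hOZ : O ⊆ Z) (hOt : O.card ≤ t) :
    trMedCost SP w Z k t τ ≤ ∑ j ∈ Z \ O, sInf (expTruncDist SP (w j) τ '' (K : Set P)) := by
  refine csInf_le ⟨0, ?_⟩ ⟨K, O, hKZ, hK, hKk, hOZ, hOt, rfl⟩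
  rintro c ⟨K', O', -, hK', -, -, -, rfl⟩
  refine sum_nonneg fun j hj => ?_
  rw [← inf'_eq_csInf_image _ hK']
  exact (le_inf'_iff hK' _).2 fun m _ =>
    expTruncDist_nonneg (hw0 j (mem_sdiff.1 hj).1) τ m

lemma trMedCost_inter_le_two_mul (hw0 : ∀ j ∈ Z, ∀ p ∈ SP, 0 ≤ w j p)
    (hw1 : ∀ j ∈ Z, ∑ p ∈ SP, w j p = 1) (hZ : (nodeSupp SP w Z).Nonempty)
    {k : ℕ} {K : Finset P} (hK : K.Nonempty) (hKk : K.card ≤ k) (O : Finset ι) (τ : ℝ) :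
    trMedCost SP w Z k (O ∩ Z).card (2 * τ) ≤
      2 * ∑ j ∈ Z \ O, sInf (expTruncDist SP (w j) τ '' (K : Set P)) := by
  choose q hqZ hq using fun m : P => (nodeSupp SP w Z).exists_min_image (dist m) hZ
  have hproj : ∀ j ∈ Z, ∀ m,
      expTruncDist SP (w j) (2 * τ) (q m) ≤ 2 * expTruncDist SP (w j) τ m := fun j hj m =>
    expTruncDist_two_mul_le (hw0 j hj) (hw1 j hj) τ fun p hp hwp =>
      hq m p (mem_nodeSupp.2 ⟨j, hj, hp, hwp⟩)
  have hqK : K.image q ⊆ nodeSupp SP w Z := image_subset_iff.2 fun m _ => hqZ m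
  calc trMedCost SP w Z k (O ∩ Z).card (2 * τ)
      ≤ ∑ j ∈ Z \ O, sInf (expTruncDist SP (w j) (2 * τ) '' (K.image q : Set P)) := by
        simpa only [sdiff_inter_self_right] using trMedCost_le hw0 hqK (hK.image q)
          (card_image_le.trans hKk) inter_subset_right le_rfl
    _ ≤ ∑ j ∈ Z \ O, 2 * sInf (expTruncDist SP (w j) τ '' (K : Set P)) := by
        refine sum_le_sum fun j hj => ?_
        have hjZ := (mem_sdiff.1 hj).1
        obtain ⟨m, hm, hmin⟩ := exists_mem_eq_inf' hK (expTruncDist SP (w j) τ)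
        rw [← inf'_eq_csInf_image _ (hK.image q), ← inf'_eq_csInf_image _ hK, hmin]
        exact (inf'_le _ (mem_image_of_mem q hm)).trans (hproj j hjZ m)
    _ = 2 * ∑ j ∈ Z \ O, sInf (expTruncDist SP (w j) τ '' (K : Set P)) := (mul_sum ..).symm

end Cost

lemma sum_biUnion_sdiff {ι α β : Type*} [Fintype ι] [DecidableEq α] [AddCommMonoid β]
    {𝒜 : ι → Finset α} (hdisj : ∀ i j, i ≠ j → Disjoint (𝒜 i) (𝒜 j)) (O : Finset α)
    (f : α → β) : ∑ a ∈ univ.biUnion 𝒜 \ O, f a = ∑ i, ∑ a ∈ 𝒜 i \ O, f a := by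
  have hsplit : univ.biUnion 𝒜 \ O = univ.biUnion fun i => 𝒜 i \ O := by
    ext a
    simp only [mem_sdiff, mem_biUnion, mem_univ, true_and]
    tauto
  rw [hsplit, sum_biUnion fun i _ j _ hij => (hdisj i j hij).mono sdiff_subset sdiff_subset]

theorem sum_local_trMedCost_le_general {P : Type*} {ι : Type*} [MetricSpace P]
    [DecidableEq P] [DecidableEq ι]
    (SP : Finset P)
    {s : ℕ} (𝒜 : Fin s → Finset ι)
    (hdisj : ∀ i j, i ≠ j → Disjoint (𝒜 i) (𝒜 j))
    (A : Finset ι) (hA : A = Finset.univ.biUnion 𝒜)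
    (w : ι → P → ℝ)
    (hw0 : ∀ j ∈ A, ∀ p ∈ SP, 0 ≤ w j p)
    (hw1 : ∀ j ∈ A, ∑ p ∈ SP, w j p = 1)
    (hsupp : ∀ i, (nodeSupp SP w (𝒜 i)).Nonempty)
    (k t : ℕ) (τ : ℝ)
    (Kstar : Finset P) (Ostar : Finset ι)
    (hK2 : Kstar.Nonempty) (hK3 : Kstar.card ≤ k)
    (hopt : (∑ j ∈ A \ Ostar,
        sInf ((fun m => ∑ p ∈ SP, w j p * max (dist p m - τ) 0) '' (Kstar : Set P)))
      = trMedCost SP w A k t τ) :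
    ∑ i, trMedCost SP w (𝒜 i) k ((Ostar ∩ 𝒜 i).card) (2 * τ) ≤
      2 * trMedCost SP w A k t τ := by
  have hsub : ∀ i, 𝒜 i ⊆ A := fun i => hA ▸ subset_biUnion_of_mem 𝒜 (mem_univ i)
  calc ∑ i, trMedCost SP w (𝒜 i) k ((Ostar ∩ 𝒜 i).card) (2 * τ)
      ≤ ∑ i, 2 * ∑ j ∈ 𝒜 i \ Ostar, sInf (expTruncDist SP (w j) τ '' (Kstar : Set P)) :=
        sum_le_sum fun i _ => trMedCost_inter_le_two_mul (fun j hj => hw0 j (hsub i hj))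
          (fun j hj => hw1 j (hsub i hj)) (hsupp i) hK2 hK3 Ostar τ
    _ = 2 * ∑ j ∈ A \ Ostar, sInf (expTruncDist SP (w j) τ '' (Kstar : Set P)) := by
        rw [← mul_sum, hA, sum_biUnion_sdiff hdisj]
    _ = 2 * trMedCost SP w A k t τ := congrArg (2 * ·) hopt

theorem sum_local_trMedCost_le {P : Type*} {ι : Type*} [MetricSpace P]
    [DecidableEq P] [DecidableEq ι]
    (SP : Finset P) (hSP : SP.Nonempty)
    {s : ℕ} (𝒜 : Fin s → Finset ι)
    (hdisj : ∀ i j, i ≠ j → Disjoint (𝒜 i) (𝒜 j))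
    (A : Finset ι) (hA : A = Finset.univ.biUnion 𝒜)
    (w : ι → P → ℝ)
    (hw0 : ∀ j ∈ A, ∀ p ∈ SP, 0 ≤ w j p)
    (hw1 : ∀ j ∈ A, ∑ p ∈ SP, w j p = 1)
    (hsupp : ∀ i, (nodeSupp SP w (𝒜 i)).Nonempty)
    (k t : ℕ) (hk : 1 ≤ k) (τ : ℝ) (hτ : 0 ≤ τ)
    (Kstar : Finset P) (Ostar : Finset ι)
    (hK1 : Kstar ⊆ nodeSupp SP w A) (hK2 : Kstar.Nonempty) (hK3 : Kstar.card ≤ k)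
    (hO1 : Ostar ⊆ A) (hO2 : Ostar.card ≤ t)
    (hopt : (∑ j ∈ A \ Ostar,
        sInf ((fun m => ∑ p ∈ SP, w j p * max (dist p m - τ) 0) '' (Kstar : Set P)))
      = trMedCost SP w A k t τ) :
    ∑ i, trMedCost SP w (𝒜 i) k ((Ostar ∩ 𝒜 i).card) (2 * τ) ≤
      2 * trMedCost SP w A k t τ :=
  sum_local_trMedCost_le_general SP 𝒜 hdisj A hA w hw0 hw1 hsupp k t τ Kstar Ostar hK2 hK3 hopt
end
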